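/- Let C be a coalgebra over a field k and p, t nonzero scalars. The linear map R(c⊗d) = p·ε(c)·Δ(d) + t·ε(d)·Δ(c) − p·c⊗d on C⊗C is invertible. -/
import Mathlib


open TensorProduct LinearMap

/-- For a coassociative counital `k`-coalgebra `C` and nonzero scalars `p, t`,
the linear map `R(c⊗d) = p·ε(c)·Δ(d) + t·ε(d)·Δ(c) − p·c⊗d` on `C ⊗ C` is invertible. -/
theorem stmt3 (k C : Type*) [Field k] [AddCommGroup C] [Module k C] [Coalgebra k C]
    (p t : k) (hp : p ≠ 0) (ht : t ≠ 0)
    (R : C ⊗[k] C →ₗ[k] C ⊗[k] C)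
    (hR : ∀ c d : C, R (c ⊗ₜ[k] d) =
      (p * Coalgebra.counit (R := k) c) • Coalgebra.comul (R := k) d
      + (t * Coalgebra.counit (R := k) d) • Coalgebra.comul (R := k) c
      - p • (c ⊗ₜ[k] d)) :
    ∃ S : C ⊗[k] C →ₗ[k] C ⊗[k] C, R ∘ₗ S = LinearMap.id ∧ S ∘ₗ R = LinearMap.id := by
  set Δ : C →ₗ[k] C ⊗[k] C := Coalgebra.comul (R := k) with hΔ
  set ε : C →ₗ[k] k := Coalgebra.counit (R := k) with hε
  set μ₁ : C ⊗[k] C →ₗ[k] C :=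
    (TensorProduct.lid k C).toLinearMap ∘ₗ ε.rTensor C with hμ₁def
  set μ₂ : C ⊗[k] C →ₗ[k] C :=
    (TensorProduct.rid k C).toLinearMap ∘ₗ ε.lTensor C with hμ₂def
  have hμ₁ : μ₁ ∘ₗ Δ = LinearMap.id := by
    rw [hμ₁def, LinearMap.comp_assoc, hΔ, hε, Coalgebra.rTensor_counit_comp_comul]
    ext c; simp
  have hμ₂ : μ₂ ∘ₗ Δ = LinearMap.id := by
    rw [hμ₂def, LinearMap.comp_assoc, hΔ, hε, Coalgebra.lTensor_counit_comp_comul]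
    ext c; simp
  set A : C ⊗[k] C →ₗ[k] C ⊗[k] C := Δ ∘ₗ μ₁ with hA
  set B : C ⊗[k] C →ₗ[k] C ⊗[k] C := Δ ∘ₗ μ₂ with hB
  have hAΔ : A ∘ₗ Δ = Δ := by rw [hA, LinearMap.comp_assoc, hμ₁]; rfl
  have hBΔ : B ∘ₗ Δ = Δ := by rw [hB, LinearMap.comp_assoc, hμ₂]; rfl
  have hAA : A ∘ₗ A = A := by rw [hA, ← LinearMap.comp_assoc, hAΔ]
  have hAB : A ∘ₗ B = B := by rw [hB, ← LinearMap.comp_assoc, hAΔ]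
  have hBA : B ∘ₗ A = A := by rw [hA, ← LinearMap.comp_assoc, hBΔ]
  have hBB : B ∘ₗ B = B := by rw [hB, ← LinearMap.comp_assoc, hBΔ]
  have hRdecomp : R = p • A + t • B - p • LinearMap.id := by
    apply TensorProduct.ext'
    intro c d
    simp only [hR, LinearMap.sub_apply, LinearMap.add_apply, LinearMap.smul_apply,
      LinearMap.id_apply, hA, hB, hμ₁def, hμ₂def, LinearMap.comp_apply,
      LinearMap.rTensor_tmul, LinearMap.lTensor_tmul, TensorProduct.lid_tmul,
      TensorProduct.rid_tmul, map_smul, smul_smul]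
    simp [map_smul, smul_smul, mul_comm]
  refine ⟨t⁻¹ • A + p⁻¹ • B - p⁻¹ • LinearMap.id, ?_, ?_⟩
  · rw [hRdecomp]
    simp only [comp_add, add_comp, comp_sub, sub_comp, comp_smul, smul_comp,
      hAA, hAB, hBA, hBB, LinearMap.id_comp, LinearMap.comp_id, smul_smul]
    match_scalars <;> field_simp <;> ring
  · rw [hRdecomp]
    simp only [comp_add, add_comp, comp_sub, sub_comp, comp_smul, smul_comp,
      hAA, hAB, hBA, hBB, LinearMap.id_comp, LinearMap.comp_id, smul_smul]
    match_scalars <;> field_simp <;> ring
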